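/- Let K ⊂ ℝⁿ be a compact basic semi-algebraic set K = {x ∈ ℝⁿ : g_j(x) ≥ 0, j = 1,…,m} for real polynomials g_1,…,g_m, let μ be a finite Borel measure on K with moment sequence z = (z_α)_{α∈ℕⁿ}, and let y = (y_α)_{α∈ℕⁿ} be a real sequence. Then y has a representing Borel measure ν on K that is uniformly absolutely continuous with respect to μ (i.e., dν = h dμ for some 0 ≤ h ∈ L_∞(K,μ)) if and only if there exists a scalar κ such that for every subset J ⊆ {1,…,m} and every polynomial f ∈ ℝ[X]: 0 ≤ L_y(f² g_J) ≤ κ L_z(f² g_J), where g_J := ∏_{j∈J} g_j (with g_∅ ≡ 1). -/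

import Mathlib

/-!
Necessity: `L_y(p) = ∫ p h dμ` and `f² g_J ≥ 0` on `K`, so `0 ≤ L_y(f² g_J) ≤ (sup h) L_z(f² g_J)`.

Sufficiency: by Cauchy–Schwarz for the functional `L_y`, which is nonnegative on squares,
`L_y(p)² ≤ L_y(1) L_y(p²) ≤ κ L_y(1) ‖p‖²_{L²(μ)}`, so `L_y` extends to a bounded functional on
`L²(μ)` and is represented by some `w ∈ L²(μ)`. Then `∫ p² w dμ ≥ 0` and `∫ p² (κ - w) dμ ≥ 0` for
every polynomial `p`. Since polynomials approximate `√c` uniformly on `K` for any continuous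
`c ≥ 0`, the same holds with `p²` replaced by `c`, and density of bounded continuous functions in
`L²(μ)` then forces `0 ≤ w ≤ κ` almost everywhere: `w` is the sought density.
-/

open MeasureTheory MvPolynomial

/-- The Riesz functional `L_y` of a sequence `y = (y_α)`:
`f = Σ_α f_α X^α ↦ Σ_α f_α y_α`. -/
noncomputable def rieszFunctional {n : ℕ} (y : (Fin n →₀ ℕ) → ℝ)
    (f : MvPolynomial (Fin n) ℝ) : ℝ :=
  ∑ α ∈ f.support, f.coeff α * y α

open Filter Topology BoundedContinuousFunction
open scoped RealInnerProductSpace ENNReal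

theorem exists_inner_eq_of_abs_le_mul_norm {V E : Type*} [AddCommGroup V] [Module ℝ V]
    [NormedAddCommGroup E] [InnerProductSpace ℝ E] [CompleteSpace E]
    (T : V →ₗ[ℝ] E) (ℓ : V →ₗ[ℝ] ℝ) (M : ℝ) (hℓ : ∀ v, |ℓ v| ≤ M * ‖T v‖) :
    ∃ w : E, ∀ v, ⟪w, T v⟫ = ℓ v := by
  have hker : LinearMap.ker T ≤ LinearMap.ker ℓ := fun v hv => by
    simpa [LinearMap.mem_ker.mp hv] using hℓ v
  let ℓ₀ : LinearMap.range T →ₗ[ℝ] ℝ :=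
    (LinearMap.ker T).liftQ ℓ hker ∘ₗ T.quotKerEquivRange.symm.toLinearMap
  have hℓ₀ : ∀ v, ℓ₀ ⟨T v, LinearMap.mem_range_self T v⟩ = ℓ v := fun v => by
    simp [ℓ₀, LinearMap.quotKerEquivRange_symm_apply_image]
  have hbound : ∀ u, ‖ℓ₀ u‖ ≤ M * ‖u‖ := by
    rintro ⟨-, v, rfl⟩
    exact (hℓ₀ v).symm ▸ hℓ v
  obtain ⟨G, hG, -⟩ := exists_extension_norm_eq _ (ℓ₀.mkContinuous M hbound)
  refine ⟨(InnerProductSpace.toDual ℝ E).symm G, fun v => ?_⟩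
  rw [InnerProductSpace.toDual_symm_apply, ← hℓ₀]
  exact hG ⟨T v, LinearMap.mem_range_self T v⟩

theorem LinearMap.sq_le_map_one_mul_map_sq {A : Type*} [Ring A] [Algebra ℝ A] (L : A →ₗ[ℝ] ℝ)
    (hL : ∀ a, 0 ≤ L (a ^ 2)) (a : A) : L a ^ 2 ≤ L 1 * L (a ^ 2) := by
  have hquad : ∀ t : ℝ, 0 ≤ L 1 * (t * t) + 2 * L a * t + L (a ^ 2) := fun t => by
    have hexp : (algebraMap ℝ A t + a) ^ 2 = (t * t) • (1 : A) + (2 * t) • a + a ^ 2 := by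
      rw [(Algebra.commute_algebraMap_left t a).add_sq, Algebra.smul_def, Algebra.smul_def,
        mul_one, map_mul, map_mul, map_ofNat, sq, mul_assoc]
    have := hL (algebraMap ℝ A t + a)
    rw [hexp, map_add, map_add, map_smul, map_smul, smul_eq_mul, smul_eq_mul] at this
    linarith
  have := discrim_le_zero hquad
  rw [discrim] at this
  linarith

theorem MvPolynomial.exists_eval_near_of_isCompact {σ : Type*} {K : Set (σ → ℝ)}
    (hK : IsCompact K) (f : C(σ → ℝ, ℝ)) {ε : ℝ} (hε : 0 < ε) :
    ∃ p : MvPolynomial σ ℝ, ∀ x ∈ K, |eval x p - f x| < ε := by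
  let coord : σ → C(σ → ℝ, ℝ) := fun i => ⟨fun x => x i, continuous_apply i⟩
  have heval : ∀ p x, aeval coord p x = eval x p := fun p x => by
    rw [← ContinuousMap.evalAlgHom_apply ℝ, ← AlgHom.comp_apply, comp_aeval, ← coe_aeval_eq_eval]
    rfl
  have hsep : (aeval (R := ℝ) coord).range.SeparatesPoints := fun x y hxy => by
    obtain ⟨i, hi⟩ := Function.ne_iff.mp hxy
    exact ⟨coord i, ⟨coord i, ⟨X i, aeval_X _ _⟩, rfl⟩, hi⟩
  obtain ⟨-, ⟨p, rfl⟩, hp⟩ :=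
    ContinuousMap.exists_mem_subalgebra_near_continuous_of_isCompact_of_separatesPoints hsep f hK hε
  exact ⟨p, fun x hx => by simpa [heval] using hp x hx⟩

theorem ae_nonneg_of_forall_integral_mul_nonneg {α : Type*} [TopologicalSpace α] [NormalSpace α]
    [MeasurableSpace α] [BorelSpace α] {μ : Measure α} [IsFiniteMeasure μ] [μ.WeaklyRegular]
    {W : α → ℝ} (hW : MemLp W 2 μ)
    (hpos : ∀ c : α →ᵇ ℝ, (∀ x, 0 ≤ c x) → 0 ≤ ∫ x, c x * W x ∂μ) : 0 ≤ᵐ[μ] W := by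
  set w := hW.toLp W
  have hw : ⇑w =ᵐ[μ] W := hW.coeFn_toLp
  -- `f ↦ ⟪f⁺, w⟫` is continuous, so its sign on the dense set of bounded continuous functions
  -- propagates to all of `L²`; at `f = -w` it is `-‖w⁻‖²`.
  have hposPart : ∀ f : Lp ℝ 2 μ, 0 ≤ ⟪Lp.posPart f, w⟫ := fun f => by
    refine (BoundedContinuousFunction.toLp_denseRange ℝ μ ℝ (by norm_num)).induction_on f
      (isClosed_le continuous_const (Lp.continuous_posPart.inner continuous_const)) fun b => ?_
    convert hpos (b ⊔ 0) fun x => le_sup_right using 1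
    rw [L2.inner_def]
    refine integral_congr_ae ?_
    filter_upwards [Lp.coeFn_posPart (BoundedContinuousFunction.toLp 2 μ ℝ b),
      BoundedContinuousFunction.coeFn_toLp 2 μ ℝ b, hw] with x h₁ h₂ h₃
    simp [h₁, h₂, h₃, mul_comm]
  have hneg : ⟪Lp.negPart w, w⟫ = -‖Lp.negPart w‖ ^ 2 := by
    rw [← real_inner_self_eq_norm_sq, L2.inner_def, L2.inner_def, ← integral_neg]
    refine integral_congr_ae ?_
    filter_upwards [Lp.coeFn_negPart_eq_max w] with x hx
    rcases le_total (w x) 0 with h | h <;> simp [hx, h, sq]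
  have hneg_zero : Lp.negPart w = 0 := by
    have : 0 ≤ ⟪Lp.negPart w, w⟫ := hposPart (-w)
    rw [← norm_eq_zero]
    nlinarith [norm_nonneg (Lp.negPart w)]
  filter_upwards [Lp.coeFn_negPart_eq_max w, hw, hneg_zero ▸ Lp.coeFn_zero ℝ 2 μ]
    with x h₁ h₂ h₃
  rw [h₁, Pi.zero_apply, max_eq_right_iff, neg_nonpos, h₂] at h₃
  exact h₃

theorem Continuous.memLp_top_of_measure_compl_eq_zero {X : Type*} [TopologicalSpace X]
    [MeasurableSpace X] [OpensMeasurableSpace X] {K : Set X} {ρ : Measure X}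
    (hK : IsCompact K) (hρ : ρ Kᶜ = 0) {f : X → ℝ} (hf : Continuous f) : MemLp f ∞ ρ := by
  obtain ⟨C, hC⟩ := hK.exists_bound_of_continuousOn hf.continuousOn
  exact memLp_top_of_bound hf.aestronglyMeasurable C
    (measure_mono_null (fun x hx hxK => hx (hC x hxK)) hρ)

theorem integral_withDensity_ofReal {X : Type*} [MeasurableSpace X] {μ : Measure X}
    {h : X → ℝ} (hh : Measurable h) (h_nonneg : 0 ≤ᵐ[μ] h) (f : X → ℝ) :
    ∫ x, f x ∂μ.withDensity (fun x => ENNReal.ofReal (h x)) = ∫ x, h x * f x ∂μ := by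
  rw [integral_withDensity_eq_integral_toReal_smul hh.ennreal_ofReal
    (ae_of_all _ fun _ => ENNReal.ofReal_lt_top)]
  refine integral_congr_ae ?_
  filter_upwards [h_nonneg] with x hx
  rw [ENNReal.toReal_ofReal hx, smul_eq_mul]

section PolynomialsOnCompact

variable {n : ℕ} {K : Set (Fin n → ℝ)} {ρ : Measure (Fin n → ℝ)}

theorem memLp_eval [IsFiniteMeasure ρ] (hK : IsCompact K) (hρ : ρ Kᶜ = 0)
    (p : MvPolynomial (Fin n) ℝ) (q : ℝ≥0∞) : MemLp (fun x => eval x p) q ρ :=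
  ((continuous_eval p).memLp_top_of_measure_compl_eq_zero hK hρ).mono_exponent le_top

theorem integrable_eval [IsFiniteMeasure ρ] (hK : IsCompact K) (hρ : ρ Kᶜ = 0)
    (p : MvPolynomial (Fin n) ℝ) : Integrable (fun x => eval x p) ρ :=
  memLp_one_iff_integrable.mp (memLp_eval hK hρ p 1)

theorem integral_mul_nonneg_of_forall_integral_eval_sq_mul_nonneg (hK : IsCompact K)
    (hρ : ρ Kᶜ = 0) {W : (Fin n → ℝ) → ℝ} (hW : Integrable W ρ)
    (hpos : ∀ p : MvPolynomial (Fin n) ℝ, 0 ≤ ∫ x, eval x p ^ 2 * W x ∂ρ)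
    (c : C(Fin n → ℝ, ℝ)) (hc : ∀ x ∈ K, 0 ≤ c x) : 0 ≤ ∫ x, c x * W x ∂ρ := by
  let s : C(Fin n → ℝ, ℝ) := ⟨fun x => √(c x), by fun_prop⟩
  choose p hp using fun k : ℕ =>
    exists_eval_near_of_isCompact hK s (Nat.one_div_pos_of_nat (n := k))
  obtain ⟨S, hS⟩ := hK.exists_bound_of_continuousOn s.continuous.continuousOn
  have haeK : ∀ᵐ x ∂ρ, x ∈ K := measure_mono_null (fun x hx => hx) hρ
  have hlim : Tendsto (fun k => ∫ x, eval x (p k) ^ 2 * W x ∂ρ) atTop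
      (𝓝 (∫ x, c x * W x ∂ρ)) := by
    refine tendsto_integral_of_dominated_convergence (fun x => (S + 1) ^ 2 * ‖W x‖)
      (fun k => ((continuous_eval _).pow 2).aestronglyMeasurable.mul hW.aestronglyMeasurable)
      (hW.norm.const_mul _) (fun k => ?_) ?_
    · filter_upwards [haeK] with x hx
      have hpk : |eval x (p k)| ≤ S + 1 := by
        have h_near := (hp k x hx).le
        have hsx : |s x| ≤ S := hS x hx
        have hε : 1 / ((k : ℝ) + 1) ≤ 1 := by
          rw [div_le_one (by positivity)]
          linarith [k.cast_nonneg (α := ℝ)]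
        linarith [abs_sub_abs_le_abs_sub (eval x (p k)) (s x)]
      rw [norm_mul, norm_pow, Real.norm_eq_abs]
      gcongr
    · filter_upwards [haeK] with x hx
      have hconv : Tendsto (fun k => eval x (p k)) atTop (𝓝 (s x)) := by
        rw [tendsto_iff_norm_sub_tendsto_zero]
        exact squeeze_zero (fun _ => norm_nonneg _) (fun k => (hp k x hx).le)
          tendsto_one_div_add_atTop_nhds_zero_nat
      rw [show c x = s x ^ 2 from (Real.sq_sqrt (hc x hx)).symm]
      exact (hconv.pow 2).mul_const _
  exact ge_of_tendsto' hlim fun k => hpos (p k)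

theorem ae_nonneg_of_forall_integral_eval_sq_mul_nonneg [IsFiniteMeasure ρ] (hK : IsCompact K)
    (hρ : ρ Kᶜ = 0) {W : (Fin n → ℝ) → ℝ} (hW : MemLp W 2 ρ)
    (hpos : ∀ p : MvPolynomial (Fin n) ℝ, 0 ≤ ∫ x, eval x p ^ 2 * W x ∂ρ) : 0 ≤ᵐ[ρ] W :=
  ae_nonneg_of_forall_integral_mul_nonneg hW fun c hc =>
    integral_mul_nonneg_of_forall_integral_eval_sq_mul_nonneg hK hρ (hW.integrable one_le_two)
      hpos c.toContinuousMap fun x _ => hc x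

end PolynomialsOnCompact

section RieszFunctional

variable {n : ℕ}

noncomputable def rieszLinearMap (y : (Fin n →₀ ℕ) → ℝ) : MvPolynomial (Fin n) ℝ →ₗ[ℝ] ℝ :=
  Finsupp.linearCombination ℝ y ∘ₗ (AddMonoidAlgebra.coeffLinearEquiv ℝ).toLinearMap

@[simp]
theorem rieszLinearMap_apply (y : (Fin n →₀ ℕ) → ℝ) (f : MvPolynomial (Fin n) ℝ) :
    rieszLinearMap y f = rieszFunctional y f := by
  rw [rieszFunctional, rieszLinearMap, LinearMap.comp_apply, Finsupp.linearCombination_apply,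
    Finsupp.sum]
  rfl

theorem rieszFunctional_monomial_one (y : (Fin n →₀ ℕ) → ℝ) (α : Fin n →₀ ℕ) :
    rieszFunctional y (monomial α 1) = y α := by
  simp [rieszFunctional, support_monomial, coeff_monomial]

theorem eval_monomial_one (α : Fin n →₀ ℕ) (x : Fin n → ℝ) :
    eval x (monomial α (1 : ℝ)) = ∏ i, x i ^ α i := by
  rw [eval_monomial, one_mul, Finsupp.prod_pow]

theorem rieszFunctional_eq_integral {ρ : Measure (Fin n → ℝ)} {y : (Fin n →₀ ℕ) → ℝ}
    (hint : ∀ α : Fin n →₀ ℕ, Integrable (fun x => ∏ i, x i ^ α i) ρ)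
    (hy : ∀ α, y α = ∫ x, ∏ i, x i ^ α i ∂ρ) (p : MvPolynomial (Fin n) ℝ) :
    rieszFunctional y p = ∫ x, eval x p ∂ρ := by
  simp_rw [rieszFunctional, hy, ← integral_const_mul, eval_eq']
  exact (integral_finsetSum _ fun α _ => (hint α).const_mul _).symm

theorem rieszFunctional_eq_integral_of_isCompact {K : Set (Fin n → ℝ)} (hK : IsCompact K)
    {ρ : Measure (Fin n → ℝ)} [IsFiniteMeasure ρ] (hρ : ρ Kᶜ = 0) {y : (Fin n →₀ ℕ) → ℝ}
    (hy : ∀ α, y α = ∫ x, ∏ i, x i ^ α i ∂ρ) (p : MvPolynomial (Fin n) ℝ) :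
    rieszFunctional y p = ∫ x, eval x p ∂ρ :=
  rieszFunctional_eq_integral (fun α => by
    simpa only [eval_monomial_one] using integrable_eval hK hρ (monomial α 1)) hy p

end RieszFunctional

section L2

variable {n : ℕ} {K : Set (Fin n → ℝ)} {μ : Measure (Fin n → ℝ)} [IsFiniteMeasure μ]

noncomputable def polynomialToLp (hK : IsCompact K) (hμ : μ Kᶜ = 0) :
    MvPolynomial (Fin n) ℝ →ₗ[ℝ] Lp ℝ 2 μ where
  toFun p := (memLp_eval hK hμ p 2).toLp _
  map_add' p q := by
    simp_rw [map_add]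
    exact MemLp.toLp_add _ _
  map_smul' t p := by
    simp_rw [smul_eval]
    exact MemLp.toLp_const_smul (𝕜 := ℝ) t (memLp_eval hK hμ p 2)

theorem inner_polynomialToLp (hK : IsCompact K) (hμ : μ Kᶜ = 0) (w : Lp ℝ 2 μ)
    (p : MvPolynomial (Fin n) ℝ) :
    ⟪w, polynomialToLp hK hμ p⟫ = ∫ x, eval x p * w x ∂μ := by
  rw [L2.inner_def]
  refine integral_congr_ae ?_
  filter_upwards [(memLp_eval hK hμ p 2).coeFn_toLp] with x hx
  simp [polynomialToLp, hx]

theorem exists_Lp_integral_mul_eq_rieszFunctional (hK : IsCompact K) (hμ : μ Kᶜ = 0)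
    {z : (Fin n →₀ ℕ) → ℝ} (hz : ∀ α, z α = ∫ x, ∏ i, x i ^ α i ∂μ)
    {y : (Fin n →₀ ℕ) → ℝ} {κ : ℝ}
    (hpos : ∀ f : MvPolynomial (Fin n) ℝ, 0 ≤ rieszFunctional y (f ^ 2))
    (hdom : ∀ f : MvPolynomial (Fin n) ℝ,
      rieszFunctional y (f ^ 2) ≤ κ * rieszFunctional z (f ^ 2)) :
    ∃ w : Lp ℝ 2 μ, ∀ p, ∫ x, eval x p * w x ∂μ = rieszFunctional y p := by
  set T := polynomialToLp hK hμ
  have hnorm : ∀ p, ‖T p‖ ^ 2 = rieszFunctional z (p ^ 2) := fun p => by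
    rw [← real_inner_self_eq_norm_sq, inner_polynomialToLp,
      rieszFunctional_eq_integral_of_isCompact hK hμ hz]
    refine integral_congr_ae ?_
    filter_upwards [(memLp_eval hK hμ p 2).coeFn_toLp] with x hx
    simp [T, polynomialToLp, hx, sq]
  have hbound : ∀ p, |rieszLinearMap y p| ≤ √(κ * rieszFunctional y 1) * ‖T p‖ := fun p => by
    have hcs := (rieszLinearMap y).sq_le_map_one_mul_map_sq (by simpa using hpos) p
    simp only [rieszLinearMap_apply] at hcs ⊢
    have hy1 : 0 ≤ rieszFunctional y 1 := by simpa using hpos 1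
    rw [← Real.sqrt_sq (norm_nonneg (T p)), ← Real.sqrt_mul' _ (sq_nonneg _)]
    refine Real.abs_le_sqrt (hcs.trans ?_)
    rw [hnorm, mul_comm κ, mul_assoc]
    exact mul_le_mul_of_nonneg_left (hdom p) hy1
  obtain ⟨w, hw⟩ := exists_inner_eq_of_abs_le_mul_norm T (rieszLinearMap y) _ hbound
  exact ⟨w, fun p => by rw [← inner_polynomialToLp hK hμ, hw, rieszLinearMap_apply]⟩

end L2

section Density

variable {n : ℕ} {K : Set (Fin n → ℝ)} {μ : Measure (Fin n → ℝ)} [IsFiniteMeasure μ]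
  {z y : (Fin n →₀ ℕ) → ℝ}

theorem rieszFunctional_nonneg_and_le_of_withDensity (hK : IsCompact K) (hμ : μ Kᶜ = 0)
    (hz : ∀ α, z α = ∫ x, ∏ i, x i ^ α i ∂μ) {h : (Fin n → ℝ) → ℝ} (hh : Measurable h) {C : ℝ}
    (hhC : ∀ᵐ x ∂μ, 0 ≤ h x ∧ h x ≤ C)
    (hy : ∀ α, y α = ∫ x, ∏ i, x i ^ α i ∂μ.withDensity (fun x => ENNReal.ofReal (h x)))
    {p : MvPolynomial (Fin n) ℝ} (hp : ∀ x ∈ K, 0 ≤ eval x p) :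
    0 ≤ rieszFunctional y p ∧ rieszFunctional y p ≤ C * rieszFunctional z p := by
  have hh_norm : ∀ᵐ x ∂μ, ‖h x‖ ≤ C :=
    hhC.mono fun x hx => (Real.norm_of_nonneg hx.1).trans_le hx.2
  have : IsFiniteMeasure (μ.withDensity fun x => ENNReal.ofReal (h x)) :=
    isFiniteMeasure_withDensity_ofReal (.of_bounded hh_norm)
  have haeK : ∀ᵐ x ∂μ, x ∈ K := measure_mono_null (fun x hx => hx) hμ
  rw [rieszFunctional_eq_integral_of_isCompact hK (withDensity_absolutelyContinuous μ _ hμ) hy,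
    rieszFunctional_eq_integral_of_isCompact hK hμ hz,
    integral_withDensity_ofReal hh (hhC.mono fun x hx => hx.1), ← integral_const_mul]
  constructor
  · refine integral_nonneg_of_ae ?_
    filter_upwards [hhC, haeK] with x hx hxK
    exact mul_nonneg hx.1 (hp x hxK)
  · refine integral_mono_ae ((integrable_eval hK hμ p).bdd_mul hh.aestronglyMeasurable hh_norm)
      ((integrable_eval hK hμ p).const_mul C) ?_
    filter_upwards [hhC, haeK] with x hx hxK
    exact mul_le_mul_of_nonneg_right hx.2 (hp x hxK)

theorem exists_bounded_density_of_rieszFunctional_sq_le (hK : IsCompact K) (hμ : μ Kᶜ = 0)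
    (hz : ∀ α, z α = ∫ x, ∏ i, x i ^ α i ∂μ) {κ : ℝ}
    (hpos : ∀ f : MvPolynomial (Fin n) ℝ, 0 ≤ rieszFunctional y (f ^ 2))
    (hdom : ∀ f : MvPolynomial (Fin n) ℝ,
      rieszFunctional y (f ^ 2) ≤ κ * rieszFunctional z (f ^ 2)) :
    ∃ h : (Fin n → ℝ) → ℝ, Measurable h ∧ (∀ᵐ x ∂μ, 0 ≤ h x ∧ h x ≤ κ) ∧
      ∀ α, y α = ∫ x, ∏ i, x i ^ α i ∂μ.withDensity (fun x => ENNReal.ofReal (h x)) := by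
  obtain ⟨w, hw⟩ := exists_Lp_integral_mul_eq_rieszFunctional hK hμ hz hpos hdom
  have hw_sq : ∀ p, ∫ x, eval x p ^ 2 * w x ∂μ = rieszFunctional y (p ^ 2) := fun p => by
    rw [← hw]
    simp only [map_pow]
  have hw_nonneg : 0 ≤ᵐ[μ] w :=
    ae_nonneg_of_forall_integral_eval_sq_mul_nonneg hK hμ (Lp.memLp w) fun p => hw_sq p ▸ hpos p
  have hw_le : 0 ≤ᵐ[μ] fun x => κ - w x := by
    refine ae_nonneg_of_forall_integral_eval_sq_mul_nonneg hK hμ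
      ((memLp_const κ).sub (Lp.memLp w)) fun p => ?_
    have hint : Integrable (fun x => eval x p ^ 2 * w x) μ := by
      have h := (memLp_eval hK hμ (p ^ 2) 2).integrable_mul (Lp.memLp w)
      simp only [Pi.mul_def, map_pow] at h
      exact h
    have hz_sq : ∫ x, eval x p ^ 2 ∂μ = rieszFunctional z (p ^ 2) := by
      simp [rieszFunctional_eq_integral_of_isCompact hK hμ hz]
    simp_rw [mul_sub, mul_comm _ κ]
    rw [integral_sub ((integrable_eval hK hμ (p ^ 2)).const_mul κ |>.congr (by simp)) hint,
      integral_const_mul, hz_sq, hw_sq]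
    linarith [hdom p]
  set h := (Lp.aestronglyMeasurable w).aemeasurable.mk w
  have hwh : ⇑w =ᵐ[μ] h := (Lp.aestronglyMeasurable w).aemeasurable.ae_eq_mk
  have hh := (Lp.aestronglyMeasurable w).aemeasurable.measurable_mk
  refine ⟨h, hh, ?_, fun α => ?_⟩
  · filter_upwards [hw_nonneg, hw_le, hwh] with x h₁ h₂ h₃
    simp only [Pi.zero_apply, sub_nonneg, h₃] at h₁ h₂
    exact ⟨h₁, h₂⟩
  · rw [integral_withDensity_ofReal hh (hw_nonneg.trans_eq hwh),
      ← rieszFunctional_monomial_one y α, ← hw]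
    refine integral_congr_ae ?_
    filter_upwards [hwh] with x hx
    rw [eval_monomial_one, hx, mul_comm]

end Density

/-- **Theorem 3.1(a)** (Lasserre, "The moment problem with bounded density").
Let `K ⊂ ℝⁿ` be a compact basic semi-algebraic set `K = {x : g_j(x) ≥ 0, j = 1,…,m}`,
let `μ` be a finite Borel measure on `K` with moment sequence `z`, and let `y` be a real
sequence.  Then `y` has a representing Borel measure `ν` on `K` which is uniformly
absolutely continuous with respect to `μ` (i.e. `dν = h dμ` with `0 ≤ h ∈ L_∞(K,μ)`)
if and only if there is a scalar `κ` such that for every `J ⊆ {1,…,m}` and every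
polynomial `f`: `0 ≤ L_y(f² g_J) ≤ κ L_z(f² g_J)`, where `g_J = ∏_{j∈J} g_j`. -/
theorem moment_problem_bounded_density_compact_schmudgen
    {n m : ℕ} (g : Fin m → MvPolynomial (Fin n) ℝ)
    (K : Set (Fin n → ℝ))
    (hKdef : K = {x : Fin n → ℝ | ∀ j : Fin m, 0 ≤ eval x (g j)})
    (hK : IsCompact K)
    (μ : Measure (Fin n → ℝ)) [IsFiniteMeasure μ] (hμK : μ Kᶜ = 0)
    (z : (Fin n →₀ ℕ) → ℝ)
    (hz : ∀ α : Fin n →₀ ℕ, z α = ∫ x, ∏ i, x i ^ α i ∂μ)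
    (y : (Fin n →₀ ℕ) → ℝ) :
    (∃ ν : Measure (Fin n → ℝ), ν Kᶜ = 0 ∧
        (∀ α : Fin n →₀ ℕ, y α = ∫ x, ∏ i, x i ^ α i ∂ν) ∧
        ∃ h : (Fin n → ℝ) → ℝ, Measurable h ∧
          ν = μ.withDensity (fun x => ENNReal.ofReal (h x)) ∧
          ∃ C : ℝ, ∀ᵐ x ∂μ, 0 ≤ h x ∧ h x ≤ C) ↔
    (∃ κ : ℝ, ∀ (J : Finset (Fin m)) (f : MvPolynomial (Fin n) ℝ),
        0 ≤ rieszFunctional y (f ^ 2 * ∏ j ∈ J, g j) ∧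
        rieszFunctional y (f ^ 2 * ∏ j ∈ J, g j) ≤
          κ * rieszFunctional z (f ^ 2 * ∏ j ∈ J, g j)) := by
  constructor
  · rintro ⟨ν, -, hy, h, hh, rfl, C, hhC⟩
    refine ⟨C, fun J f => rieszFunctional_nonneg_and_le_of_withDensity hK hμK hz hh hhC hy
      fun x hx => ?_⟩
    rw [hKdef] at hx
    simp only [map_mul, map_pow, map_prod]
    exact mul_nonneg (sq_nonneg _) (Finset.prod_nonneg fun j _ => hx j)
  · rintro ⟨κ, hκ⟩
    have hsq : ∀ f : MvPolynomial (Fin n) ℝ, f ^ 2 * ∏ j ∈ (∅ : Finset (Fin m)), g j = f ^ 2 := by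
      simp
    obtain ⟨h, hh, hhκ, hy⟩ := exists_bounded_density_of_rieszFunctional_sq_le hK hμK hz
      (fun f => hsq f ▸ (hκ ∅ f).1) (fun f => hsq f ▸ (hκ ∅ f).2)
    exact ⟨_, withDensity_absolutelyContinuous μ _ hμK, hy, h, hh, rfl, κ, hhκ⟩
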